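/- arXiv:1408.1703 — 2 statements merged into one kernel-verified Lean document; each statement's English description precedes it below -/
import Mathlib

section
/- If a signed eulerian graph with an odd number of negative edges contains two edge-disjoint unbalanced circuits, then it can be decomposed into three edge-disjoint eulerian subgraphs each having an odd number of negative edges. -/
open Finset


section AbstractGraph
open Finset Relation


/-- Relation `A` restricted to a finset `P`. -/
def RelOn {α : Type} (A : α → α → Prop) (P : Finset α) (x y : α) : Prop :=
  x ∈ P ∧ y ∈ P ∧ A x y

lemma RelOn.mono {α : Type} {A : α → α → Prop} {P Q : Finset α} (h : P ⊆ Q) :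
    ∀ x y, RelOn A P x y → RelOn A Q x y := fun _ _ ⟨h1, h2, h3⟩ => ⟨h h1, h h2, h3⟩

lemma RelOn.symm {α : Type} {A : α → α → Prop} (hA : Symmetric A) (P : Finset α) :
    Symmetric (RelOn A P) := fun _ _ ⟨h1, h2, h3⟩ => ⟨h2, h1, hA h3⟩

/-- Chains of given length. -/
def chainLen {α : Type} (A : α → α → Prop) : ℕ → α → α → Prop
  | 0 => fun x y => x = y
  | n+1 => fun x y => ∃ z, A x z ∧ chainLen A n z y

lemma chainLen_tail {α : Type} {A : α → α → Prop} :
    ∀ {n x y z}, chainLen A n x y → A y z → chainLen A (n+1) x z := by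
  intro n
  induction n with
  | zero => intro x y z h h'; cases h; exact ⟨z, h', rfl⟩
  | succ n ih =>
    rintro x y z ⟨w, hw, hc⟩ h'
    exact ⟨w, hw, ih hc h'⟩

lemma reflTransGen_iff_chainLen {α : Type} (A : α → α → Prop) (x y : α) :
    ReflTransGen A x y ↔ ∃ n, chainLen A n x y := by
  constructor
  · intro h
    induction h with
    | refl => exact ⟨0, rfl⟩
    | tail _ h ih => obtain ⟨n, hn⟩ := ih; exact ⟨n+1, chainLen_tail hn h⟩
  · rintro ⟨n, hn⟩
    induction n generalizing x with
    | zero => cases hn; rfl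
    | succ n ih =>
      obtain ⟨z, hz, hc⟩ := hn
      exact ReflTransGen.head hz (ih _ hc)

/-- A finite connected graph with at least two vertices has a non-cut vertex. -/
lemma exists_noncut {α : Type} [DecidableEq α] {A : α → α → Prop} (hA : Symmetric A)
    {N : Finset α} (h2 : 2 ≤ N.card)
    (hconn : ∀ x ∈ N, ∀ y ∈ N, ReflTransGen (RelOn A N) x y) :
    ∃ x ∈ N, ∀ u ∈ N.erase x, ∀ v ∈ N.erase x,
      ReflTransGen (RelOn A (N.erase x)) u v := by
  classical
  have hne : N.Nonempty := Finset.card_pos.mp (by omega)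
  obtain ⟨r, hr⟩ := hne
  have hex : ∀ x ∈ N, ∃ n, chainLen (RelOn A N) n x r := fun x hx =>
    (reflTransGen_iff_chainLen _ _ _).mp (hconn x hx r hr)
  set d : α → ℕ := fun x =>
    if h : ∃ n, chainLen (RelOn A N) n x r then Nat.find h else 0 with hd
  have hdspec : ∀ x ∈ N, chainLen (RelOn A N) (d x) x r := by
    intro x hx
    have h := hex x hx
    simp only [hd, dif_pos h]
    exact Nat.find_spec h
  have hdmin : ∀ x ∈ N, ∀ n, chainLen (RelOn A N) n x r → d x ≤ n := by
    intro x hx n hn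
    have h := hex x hx
    simp only [hd, dif_pos h]
    exact Nat.find_min' h hn
  have hdr : d r = 0 := Nat.le_zero.mp (hdmin r hr 0 rfl)
  obtain ⟨x₀, hx₀N, hmax⟩ := N.exists_max_image d ⟨r, hr⟩
  -- if the max distance is 0, all vertices equal r, contradicting card ≥ 2
  have hpos : 1 ≤ d x₀ := by
    by_contra h
    have h0 : d x₀ = 0 := by omega
    have : ∀ x ∈ N, x = r := by
      intro x hx
      have := hdspec x hx
      have hx0 : d x = 0 := by have := hmax x hx; omega
      rwa [hx0] at this
    have : N ⊆ {r} := fun x hx => Finset.mem_singleton.mpr (this x hx)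
    have := Finset.card_le_card this
    simp at this; omega
  have hx₀r : x₀ ≠ r := fun h => by rw [h, hdr] at hpos; omega
  refine ⟨x₀, hx₀N, ?_⟩
  have key : ∀ k, ∀ y ∈ N.erase x₀, d y ≤ k →
      ReflTransGen (RelOn A (N.erase x₀)) y r := by
    intro k
    induction k with
    | zero =>
      intro y hy hdy
      have hyN := Finset.mem_of_mem_erase hy
      have := hdspec y hyN
      rw [Nat.le_zero.mp hdy] at this
      cases this; exact ReflTransGen.refl
    | succ k ih =>
      intro y hy hdy
      have hyN := Finset.mem_of_mem_erase hy
      by_cases hyr : y = r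
      · subst hyr; exact ReflTransGen.refl
      · have hspec := hdspec y hyN
        have hdy1 : 1 ≤ d y := by
          rcases Nat.eq_zero_or_pos (d y) with h0 | h1
          · rw [h0] at hspec; cases hspec; exact absurd rfl hyr
          · exact h1
        obtain ⟨m, hm⟩ : ∃ m, d y = m + 1 := ⟨d y - 1, by omega⟩
        rw [hm] at hspec
        obtain ⟨z, hz, hc⟩ := hspec
        have hzN : z ∈ N := hz.2.1
        have hdz : d z ≤ m := hdmin z hzN m hc
        have hzx₀ : z ≠ x₀ := by
          intro h; subst h
          have := hmax y hyN
          omega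
        have hzer : z ∈ N.erase x₀ := Finset.mem_erase.mpr ⟨hzx₀, hzN⟩
        refine ReflTransGen.head ⟨hy, hzer, hz.2.2⟩ (ih z hzer ?_)
        have := hmax y hyN
        omega
  intro u hu v hv
  have h1 := key (d u) u hu le_rfl
  have h2 := key (d v) v hv le_rfl
  exact h1.trans (Std.Symm.symm (self := @ReflTransGen.stdSymm _ _ ⟨RelOn.symm hA _⟩) _ _ h2)

/-- Extract a neighbour: a nontrivial reachability gives a first exit. -/
lemma exists_neighbor {α : Type} {A : α → α → Prop} {P : Finset α} {x y : α}
    (h : ReflTransGen (RelOn A P) x y) (hxy : x ≠ y) :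
    ∃ z ∈ P, z ≠ x ∧ A x z := by
  induction h using ReflTransGen.head_induction_on with
  | refl => exact absurd rfl hxy
  | head h' hrest ih =>
    rename_i a c
    by_cases hac : c = a
    · subst hac; exact ih hxy
    · exact ⟨c, h'.2.1, hac, h'.2.2⟩

/-- Attach a new point to a connected part via a neighbour. -/
lemma conn_insert {α : Type} [DecidableEq α] {A : α → α → Prop} (hA : Symmetric A)
    {P : Finset α} {x z : α} (hz : z ∈ P) (hxz : A x z)
    (hP : ∀ u ∈ P, ∀ v ∈ P, ReflTransGen (RelOn A P) u v) :
    ∀ u ∈ insert x P, ∀ v ∈ insert x P, ReflTransGen (RelOn A (insert x P)) u v := by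
  have hmono : ∀ u v, RelOn A P u v → RelOn A (insert x P) u v :=
    fun u v ⟨h1, h2, h3⟩ => ⟨Finset.mem_insert_of_mem h1, Finset.mem_insert_of_mem h2, h3⟩
  have hxstep : ReflTransGen (RelOn A (insert x P)) x z :=
    ReflTransGen.single ⟨Finset.mem_insert_self x P, Finset.mem_insert_of_mem hz, hxz⟩
  have hreach : ∀ u ∈ insert x P, ReflTransGen (RelOn A (insert x P)) x u := by
    intro u hu
    rcases Finset.mem_insert.mp hu with h | h
    · subst h; exact ReflTransGen.refl
    · exact hxstep.trans (ReflTransGen.mono hmono _ _ (hP z hz u h))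
  intro u hu v hv
  have hsym : Symmetric (RelOn A (insert x P)) :=
    fun _ _ ⟨h1, h2, h3⟩ => ⟨h2, h1, hA h3⟩
  exact (Std.Symm.symm (self := @ReflTransGen.stdSymm _ _ ⟨hsym⟩) _ _ (hreach u hu)).trans (hreach v hv)

/-- Bipartition of a connected weighted graph with even total weight and an
odd vertex into two connected parts of odd weight. -/
lemma bipartition {α : Type} [DecidableEq α] {A : α → α → Prop} (hA : Symmetric A) :
    ∀ (N : Finset α) (w : α → ZMod 2),
    (∀ x ∈ N, ∀ y ∈ N, ReflTransGen (RelOn A N) x y) →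
    (∑ x ∈ N, w x) = 0 → (∃ x ∈ N, w x = 1) →
    ∃ P Q : Finset α, Disjoint P Q ∧ P ∪ Q = N ∧
      (∀ u ∈ P, ∀ v ∈ P, ReflTransGen (RelOn A P) u v) ∧
      (∀ u ∈ Q, ∀ v ∈ Q, ReflTransGen (RelOn A Q) u v) ∧
      (∑ x ∈ P, w x) = 1 ∧ (∑ x ∈ Q, w x) = 1 := by
  intro N
  induction N using Finset.strongInduction with
  | _ N ih =>
    intro w hconn htot ⟨x₁, hx₁N, hwx₁⟩
    have h2 : 2 ≤ N.card := by
      by_contra h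
      interval_cases hc : N.card
      · exact absurd hx₁N (Finset.card_eq_zero.mp hc ▸ Finset.notMem_empty _)
      · obtain ⟨a, ha⟩ := Finset.card_eq_one.mp hc
        rw [ha] at htot hx₁N
        rw [Finset.mem_singleton.mp hx₁N] at hwx₁
        rw [Finset.sum_singleton, hwx₁] at htot
        exact one_ne_zero htot
    obtain ⟨x₀, hx₀N, hnc⟩ := exists_noncut hA h2 hconn
    have herase_sub : N.erase x₀ ⊂ N := Finset.erase_ssubset hx₀N
    have hsum_erase : ∑ x ∈ N.erase x₀, w x = w x₀ + ∑ x ∈ N.erase x₀, w x - w x₀ := by ring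
    have hsum : w x₀ + ∑ x ∈ N.erase x₀, w x = 0 := by
      rw [← Finset.add_sum_erase N w hx₀N] at htot; exact htot
    by_cases hw : w x₀ = 1
    · -- parts: {x₀} and N.erase x₀
      refine ⟨{x₀}, N.erase x₀, ?_, ?_, ?_, hnc, ?_, ?_⟩
      · simp [Finset.disjoint_singleton_left]
      · rw [show ({x₀} : Finset α) ∪ N.erase x₀ = insert x₀ (N.erase x₀) from rfl, Finset.insert_erase hx₀N]
      · intro u hu v hv
        simp only [Finset.mem_singleton] at hu hv
        subst hu; subst hv; exact ReflTransGen.refl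
      · rw [Finset.sum_singleton]; exact hw
      · have : (1 : ZMod 2) + ∑ x ∈ N.erase x₀, w x = 0 := by rw [← hw]; exact hsum
        have h1 : ∑ x ∈ N.erase x₀, w x = 1 := by
          have : ∑ x ∈ N.erase x₀, w x = -1 := by linear_combination this
          rw [this]; decide
        exact h1
    · -- w x₀ = 0; recurse and attach x₀
      have hw0 : w x₀ = 0 := by
        have hall : ∀ a : ZMod 2, a = 0 ∨ a = 1 := by decide
        rcases hall (w x₀) with h | h
        · exact h
        · exact absurd h hw
      have htot' : ∑ x ∈ N.erase x₀, w x = 0 := by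
        rw [hw0, zero_add] at hsum; exact hsum
      have hodd' : ∃ x ∈ N.erase x₀, w x = 1 := by
        refine ⟨x₁, Finset.mem_erase.mpr ⟨?_, hx₁N⟩, hwx₁⟩
        intro h; rw [h, hw0] at hwx₁; exact one_ne_zero hwx₁.symm
      obtain ⟨P, Q, hdisj, hunion, hPc, hQc, hPs, hQs⟩ :=
        ih (N.erase x₀) herase_sub w hnc htot' hodd'
      -- find a neighbour of x₀ in N.erase x₀
      obtain ⟨x₂, hx₂, hwx2⟩ := hodd'
      have hx₂N : x₂ ∈ N := Finset.mem_of_mem_erase hx₂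
      have hx₀x₂ : x₀ ≠ x₂ := fun h => (Finset.mem_erase.mp hx₂).1 h.symm
      obtain ⟨z, hzN, hzx₀, hAz⟩ := exists_neighbor (hconn x₀ hx₀N x₂ hx₂N) hx₀x₂
      have hzer : z ∈ P ∪ Q := hunion ▸ Finset.mem_erase.mpr ⟨hzx₀, hzN⟩
      have hx₀nPQ : x₀ ∉ P ∪ Q := by
        rw [hunion]; exact fun h => (Finset.mem_erase.mp h).1 rfl
      rcases Finset.mem_union.mp hzer with hz | hz
      · refine ⟨insert x₀ P, Q, ?_, ?_, conn_insert hA hz hAz hPc, hQc, ?_, hQs⟩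
        · rw [Finset.disjoint_insert_left]
          exact ⟨fun h => hx₀nPQ (Finset.mem_union_right _ h), hdisj⟩
        · rw [Finset.insert_union, hunion, Finset.insert_erase hx₀N]
        · rw [Finset.sum_insert (fun h => hx₀nPQ (Finset.mem_union_left _ h)), hw0,
            zero_add]; exact hPs
      · refine ⟨P, insert x₀ Q, ?_, ?_, hPc, conn_insert hA hz hAz hQc, hPs, ?_⟩
        · rw [Finset.disjoint_insert_right]
          exact ⟨fun h => hx₀nPQ (Finset.mem_union_left _ h), hdisj⟩
        · rw [Finset.union_insert, hunion]
          rw [Finset.insert_erase hx₀N]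
        · rw [Finset.sum_insert (fun h => hx₀nPQ (Finset.mem_union_right _ h)), hw0,
            zero_add]; exact hQs

/-- Tripartition of a connected weighted graph with odd total weight and three
odd vertices into three connected parts of odd weight. -/
lemma tripartition {α : Type} [DecidableEq α] {A : α → α → Prop} (hA : Symmetric A) :
    ∀ (N : Finset α) (w : α → ZMod 2),
    (∀ x ∈ N, ∀ y ∈ N, ReflTransGen (RelOn A N) x y) →
    (∑ x ∈ N, w x) = 1 →
    ∀ x₁ x₂ x₃, x₁ ∈ N → x₂ ∈ N → x₃ ∈ N → x₁ ≠ x₂ → x₁ ≠ x₃ → x₂ ≠ x₃ →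
    w x₁ = 1 → w x₂ = 1 → w x₃ = 1 →
    ∃ P₁ P₂ P₃ : Finset α, Disjoint P₁ P₂ ∧ Disjoint P₁ P₃ ∧ Disjoint P₂ P₃ ∧
      P₁ ∪ P₂ ∪ P₃ = N ∧
      (∀ u ∈ P₁, ∀ v ∈ P₁, ReflTransGen (RelOn A P₁) u v) ∧
      (∀ u ∈ P₂, ∀ v ∈ P₂, ReflTransGen (RelOn A P₂) u v) ∧
      (∀ u ∈ P₃, ∀ v ∈ P₃, ReflTransGen (RelOn A P₃) u v) ∧
      (∑ x ∈ P₁, w x) = 1 ∧ (∑ x ∈ P₂, w x) = 1 ∧ (∑ x ∈ P₃, w x) = 1 := by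
  intro N
  induction N using Finset.strongInduction with
  | _ N ih =>
    intro w hconn htot x₁ x₂ x₃ h1N h2N h3N h12 h13 h23 hw1 hw2 hw3
    have h2 : 2 ≤ N.card := by
      have : ({x₁, x₂} : Finset α) ⊆ N := by
        intro a ha; rcases Finset.mem_insert.mp ha with h | h
        · subst h; exact h1N
        · rw [Finset.mem_singleton.mp h]; exact h2N
      have hc : ({x₁, x₂} : Finset α).card = 2 := Finset.card_pair h12
      have := Finset.card_le_card this
      omega
    obtain ⟨x₀, hx₀N, hnc⟩ := exists_noncut hA h2 hconn
    have herase_sub : N.erase x₀ ⊂ N := Finset.erase_ssubset hx₀N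
    have hsum : w x₀ + ∑ x ∈ N.erase x₀, w x = 1 := by
      rw [← Finset.add_sum_erase N w hx₀N] at htot; exact htot
    by_cases hw : w x₀ = 1
    · -- parts: {x₀}, and bipartition of the rest
      have htot' : ∑ x ∈ N.erase x₀, w x = 0 := by
        rw [hw] at hsum
        have hall : ∀ a : ZMod 2, 1 + a = 1 → a = 0 := by decide
        exact hall _ hsum
      -- at least two of x₁,x₂,x₃ differ from x₀
      have hodd' : ∃ y ∈ N.erase x₀, w y = 1 := by
        by_cases e1 : x₁ = x₀
        · refine ⟨x₂, Finset.mem_erase.mpr ⟨?_, h2N⟩, hw2⟩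
          intro h; exact h12 (e1.trans h.symm)
        · exact ⟨x₁, Finset.mem_erase.mpr ⟨e1, h1N⟩, hw1⟩
      obtain ⟨P, Q, hdisj, hunion, hPc, hQc, hPs, hQs⟩ :=
        bipartition hA (N.erase x₀) w hnc htot' hodd'
      refine ⟨{x₀}, P, Q, ?_, ?_, hdisj, ?_, ?_, hPc, hQc, ?_, hPs, hQs⟩
      · rw [Finset.disjoint_singleton_left]
        intro h
        have := hunion ▸ Finset.mem_union_left Q h
        exact (Finset.mem_erase.mp this).1 rfl
      · rw [Finset.disjoint_singleton_left]
        intro h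
        have := hunion ▸ Finset.mem_union_right P h
        exact (Finset.mem_erase.mp this).1 rfl
      · rw [Finset.union_assoc, hunion,
          show ({x₀} : Finset α) ∪ N.erase x₀ = insert x₀ (N.erase x₀) from rfl,
          Finset.insert_erase hx₀N]
      · intro u hu v hv
        rw [Finset.mem_singleton.mp hu, Finset.mem_singleton.mp hv]
      · rw [Finset.sum_singleton]; exact hw
    · -- w x₀ = 0; recurse and attach
      have hw0 : w x₀ = 0 := by
        have hall : ∀ a : ZMod 2, a = 0 ∨ a = 1 := by decide
        rcases hall (w x₀) with h | h
        · exact h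
        · exact absurd h hw
      have htot' : ∑ x ∈ N.erase x₀, w x = 1 := by rw [hw0, zero_add] at hsum; exact hsum
      have hne : ∀ y, w y = 1 → y ≠ x₀ := fun y hy h => by
        rw [h, hw0] at hy; exact one_ne_zero hy.symm
      obtain ⟨P₁, P₂, P₃, d12, d13, d23, hunion, hc1, hc2, hc3, hs1, hs2, hs3⟩ :=
        ih (N.erase x₀) herase_sub w hnc htot' x₁ x₂ x₃
          (Finset.mem_erase.mpr ⟨hne _ hw1, h1N⟩)
          (Finset.mem_erase.mpr ⟨hne _ hw2, h2N⟩)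
          (Finset.mem_erase.mpr ⟨hne _ hw3, h3N⟩) h12 h13 h23 hw1 hw2 hw3
      obtain ⟨z, hzN, hzx₀, hAz⟩ :=
        exists_neighbor (hconn x₀ hx₀N x₁ h1N) (fun h => hne _ hw1 h.symm)
      have hzer : z ∈ P₁ ∪ P₂ ∪ P₃ := hunion ▸ Finset.mem_erase.mpr ⟨hzx₀, hzN⟩
      have hx₀nP : x₀ ∉ P₁ ∪ P₂ ∪ P₃ := by
        rw [hunion]; exact fun h => (Finset.mem_erase.mp h).1 rfl
      have hx₀n1 : x₀ ∉ P₁ := fun h => hx₀nP (Finset.mem_union_left _ (Finset.mem_union_left _ h))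
      have hx₀n2 : x₀ ∉ P₂ := fun h => hx₀nP (Finset.mem_union_left _ (Finset.mem_union_right _ h))
      have hx₀n3 : x₀ ∉ P₃ := fun h => hx₀nP (Finset.mem_union_right _ h)
      rcases Finset.mem_union.mp hzer with hz' | hz3
      · rcases Finset.mem_union.mp hz' with hz1 | hz2
        · refine ⟨insert x₀ P₁, P₂, P₃, ?_, ?_, d23, ?_,
            conn_insert hA hz1 hAz hc1, hc2, hc3, ?_, hs2, hs3⟩
          · rw [Finset.disjoint_insert_left]; exact ⟨hx₀n2, d12⟩
          · rw [Finset.disjoint_insert_left]; exact ⟨hx₀n3, d13⟩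
          · rw [Finset.insert_union, Finset.insert_union, hunion, Finset.insert_erase hx₀N]
          · rw [Finset.sum_insert hx₀n1, hw0, zero_add]; exact hs1
        · refine ⟨P₁, insert x₀ P₂, P₃, ?_, d13, ?_, ?_,
            hc1, conn_insert hA hz2 hAz hc2, hc3, hs1, ?_, hs3⟩
          · rw [Finset.disjoint_insert_right]; exact ⟨hx₀n1, d12⟩
          · rw [Finset.disjoint_insert_left]; exact ⟨hx₀n3, d23⟩
          · rw [Finset.union_insert, Finset.insert_union, hunion, Finset.insert_erase hx₀N]
          · rw [Finset.sum_insert hx₀n2, hw0, zero_add]; exact hs2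
      · refine ⟨P₁, P₂, insert x₀ P₃, d12, ?_, ?_, ?_,
          hc1, hc2, conn_insert hA hz3 hAz hc3, hs1, hs2, ?_⟩
        · rw [Finset.disjoint_insert_right]; exact ⟨hx₀n1, d13⟩
        · rw [Finset.disjoint_insert_right]; exact ⟨hx₀n2, d23⟩
        · rw [Finset.union_insert, hunion, Finset.insert_erase hx₀N]
        · rw [Finset.sum_insert hx₀n3, hw0, zero_add]; exact hs3

end AbstractGraph

/-- A signed multigraph on vertex type `V` with edge type `E`: each edge `e`
consists of two half-edges indexed by `Bool`; `ends e i` is the end-vertex at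
which the half-edge `(e, i)` is attached (loops and multiple edges are
allowed), and `sign e ∈ {1, -1}` is the sign of the edge `e`. -/
structure SignedGraph (V E : Type) where
  ends : E → Bool → V
  sign : E → ℤˣ

namespace SignedGraph

variable {V E : Type} [Fintype V] [Fintype E] [DecidableEq V] [DecidableEq E]

/-- The valency of `v` in the subgraph spanned by the edge set `S`:
the number of half-edges of edges of `S` attached at `v` (a loop at `v`
contributes `2`). -/
def valencyOn (G : SignedGraph V E) (S : Finset E) (v : V) : ℕ :=
  (univ.filter fun p : E × Bool => p.1 ∈ S ∧ G.ends p.1 p.2 = v).card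

/-- The valency of a vertex in `G`. -/
def valency (G : SignedGraph V E) (v : V) : ℕ :=
  G.valencyOn univ v

/-- The set of vertices incident with some edge of `S`. -/
def suppV (G : SignedGraph V E) (S : Finset E) : Finset V :=
  univ.filter fun v => ∃ e ∈ S, ∃ i : Bool, G.ends e i = v

/-- `u` and `v` are joined by an edge of `S`. -/
def AdjOn (G : SignedGraph V E) (S : Finset E) (u v : V) : Prop :=
  ∃ e ∈ S, ∃ i : Bool, G.ends e i = u ∧ G.ends e (!i) = v

/-- The subgraph spanned by the edge set `S` is connected: any two vertices
incident with edges of `S` are joined by a walk using edges of `S`. -/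
def ConnOn (G : SignedGraph V E) (S : Finset E) : Prop :=
  ∀ u ∈ G.suppV S, ∀ v ∈ G.suppV S, Relation.ReflTransGen (G.AdjOn S) u v

/-- `G` is connected (as a graph on the whole vertex set `V`). -/
def Connected (G : SignedGraph V E) : Prop :=
  Nonempty V ∧ ∀ u v : V, Relation.ReflTransGen (G.AdjOn univ) u v

/-- The edge set `S` spans a circuit: a nonempty connected `2`-regular
subgraph. -/
def IsCircuit (G : SignedGraph V E) (S : Finset E) : Prop :=
  S.Nonempty ∧ G.ConnOn S ∧ ∀ v ∈ G.suppV S, G.valencyOn S v = 2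

/-- The sign of a set of edges: the product of the signs of its edges. -/
def signOf (G : SignedGraph V E) (S : Finset E) : ℤˣ :=
  ∏ e ∈ S, G.sign e

/-- The negative edges among `S`. -/
def negEdges (G : SignedGraph V E) (S : Finset E) : Finset E :=
  S.filter fun e => G.sign e = -1

/-- A balanced circuit: a circuit of sign `+1`. -/
def IsBalancedCircuit (G : SignedGraph V E) (S : Finset E) : Prop :=
  G.IsCircuit S ∧ G.signOf S = 1

/-- An unbalanced circuit: a circuit of sign `-1`. -/
def IsUnbalancedCircuit (G : SignedGraph V E) (S : Finset E) : Prop :=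
  G.IsCircuit S ∧ G.signOf S = -1

/-- `G` is balanced: it contains no unbalanced circuit. -/
def Balanced (G : SignedGraph V E) : Prop :=
  ∀ S : Finset E, G.IsCircuit S → G.signOf S = 1

/-- `G` is tightly unbalanced: it is unbalanced, but for some edge `f` the
graph `G - f` is balanced. -/
def TightlyUnbalanced (G : SignedGraph V E) : Prop :=
  ¬ G.Balanced ∧ ∃ f : E, ∀ S : Finset E, G.IsCircuit S → f ∉ S → G.signOf S = 1

/-- `G` is eulerian: connected with all valencies even. -/
def Eulerian (G : SignedGraph V E) : Prop :=
  G.Connected ∧ ∀ v : V, Even (G.valency v)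

/-- The edge set `S` spans an eulerian subgraph of `G`. -/
def EulerianOn (G : SignedGraph V E) (S : Finset E) : Prop :=
  S.Nonempty ∧ G.ConnOn S ∧ ∀ v : V, Even (G.valencyOn S v)

/-- An orientation (bidirection) of `G`: `dir e i = true` means that the
half-edge `(e, i)` is directed towards its end-vertex, `dir e i = false` that
it is directed away from it.  Compatibility: a positive edge becomes an
ordinary directed edge (one half-edge in, one out) and a negative edge becomes
a broken (extroverted or introverted) edge. -/
structure Orientation (G : SignedGraph V E) where
  dir : E → Bool → Bool
  compat : ∀ e : E, G.sign e = 1 ↔ dir e false ≠ dir e true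

/-- `φ` is a flow on `G` with respect to the orientation `O`: at every vertex
`v`, the sum of values on half-edges directed into `v` equals the sum of
values on half-edges directed out of `v` (Kirchhoff's law). -/
def IsFlow {A : Type} [AddCommGroup A] (G : SignedGraph V E)
    (O : G.Orientation) (φ : E → A) : Prop :=
  ∀ v : V,
    ∑ p ∈ univ.filter (fun p : E × Bool => G.ends p.1 p.2 = v),
      (if O.dir p.1 p.2 then φ p.1 else -φ p.1) = 0

/-- `G` admits a nowhere-zero `A`-flow. -/
def HasNZFlow (G : SignedGraph V E) (A : Type) [AddCommGroup A] : Prop :=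
  ∃ (O : G.Orientation) (φ : E → A), G.IsFlow O φ ∧ ∀ e : E, φ e ≠ 0

/-- `G` is flow-admissible: it admits a nowhere-zero integer flow. -/
def FlowAdmissible (G : SignedGraph V E) : Prop :=
  ∃ (O : G.Orientation) (φ : E → ℤ), G.IsFlow O φ ∧ ∀ e : E, φ e ≠ 0

/-- `G` admits a nowhere-zero `k`-flow: an integer flow with all values in
`{±1, …, ±(k-1)}`. -/
def HasNZkFlow (G : SignedGraph V E) (k : ℕ) : Prop :=
  ∃ (O : G.Orientation) (φ : E → ℤ), G.IsFlow O φ ∧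
    ∀ e : E, φ e ≠ 0 ∧ |φ e| < (k : ℤ)

/-- `G` is triply odd: it can be decomposed into three edge-disjoint eulerian
subgraphs, each with an odd number of negative edges, sharing a common
vertex. -/
def TriplyOdd (G : SignedGraph V E) : Prop :=
  ∃ S₁ S₂ S₃ : Finset E,
    Disjoint S₁ S₂ ∧ Disjoint S₁ S₃ ∧ Disjoint S₂ S₃ ∧
    S₁ ∪ S₂ ∪ S₃ = univ ∧
    G.EulerianOn S₁ ∧ G.EulerianOn S₂ ∧ G.EulerianOn S₃ ∧
    Odd (G.negEdges S₁).card ∧ Odd (G.negEdges S₂).card ∧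
    Odd (G.negEdges S₃).card ∧
    ∃ v : V, v ∈ G.suppV S₁ ∧ v ∈ G.suppV S₂ ∧ v ∈ G.suppV S₃

/-- The edge set `P` spans a (nontrivial) path from `u` to `v`: a connected
subgraph in which `u` and `v` have valency `1` and all other vertices have
valency `2`. -/
def IsPathOn (G : SignedGraph V E) (P : Finset E) (u v : V) : Prop :=
  u ≠ v ∧ G.ConnOn P ∧ u ∈ G.suppV P ∧ v ∈ G.suppV P ∧
  G.valencyOn P u = 1 ∧ G.valencyOn P v = 1 ∧
  ∀ w ∈ G.suppV P, w ≠ u → w ≠ v → G.valencyOn P w = 2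

/-- `T` spans a signed circuit of type (2): the union of two unbalanced
circuits meeting at a single vertex. -/
def IsType2 (G : SignedGraph V E) (T : Finset E) : Prop :=
  ∃ (S₁ S₂ : Finset E) (v : V),
    G.IsUnbalancedCircuit S₁ ∧ G.IsUnbalancedCircuit S₂ ∧ Disjoint S₁ S₂ ∧
    G.suppV S₁ ∩ G.suppV S₂ = {v} ∧ S₁ ∪ S₂ = T

/-- `T` spans a signed circuit of type (3): the union of two vertex-disjoint
unbalanced circuits together with a path meeting the circuits only at its
ends. -/
def IsType3 (G : SignedGraph V E) (T : Finset E) : Prop :=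
  ∃ (S₁ S₂ P : Finset E) (u v : V),
    G.IsUnbalancedCircuit S₁ ∧ G.IsUnbalancedCircuit S₂ ∧
    Disjoint (G.suppV S₁) (G.suppV S₂) ∧
    G.IsPathOn P u v ∧ u ∈ G.suppV S₁ ∧ v ∈ G.suppV S₂ ∧
    G.suppV P ∩ G.suppV S₁ = {u} ∧ G.suppV P ∩ G.suppV S₂ = {v} ∧
    Disjoint P (S₁ ∪ S₂) ∧ S₁ ∪ S₂ ∪ P = T

/-- `T` spans a signed circuit: a balanced circuit, or a signed circuit of
type (2) or (3). -/
def IsSignedCircuit (G : SignedGraph V E) (T : Finset E) : Prop :=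
  G.IsBalancedCircuit T ∨ G.IsType2 T ∨ G.IsType3 T

/-- `T` spans a weak unbalanced bicircuit: two edge-disjoint unbalanced
circuits (not necessarily vertex-disjoint) joined by a possibly trivial path
having no edge in the two circuits. -/
def IsWeakBicircuit (G : SignedGraph V E) (T : Finset E) : Prop :=
  ∃ C₁ C₂ : Finset E,
    G.IsUnbalancedCircuit C₁ ∧ G.IsUnbalancedCircuit C₂ ∧ Disjoint C₁ C₂ ∧
    (((∃ v : V, v ∈ G.suppV C₁ ∧ v ∈ G.suppV C₂) ∧ T = C₁ ∪ C₂) ∨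
      ∃ (P : Finset E) (u v : V),
        G.IsPathOn P u v ∧ u ∈ G.suppV C₁ ∧ v ∈ G.suppV C₂ ∧
        Disjoint P (C₁ ∪ C₂) ∧ T = C₁ ∪ C₂ ∪ P)

/-- Every connected component of `G - f` contains an unbalanced circuit,
i.e. `G - f` has no balanced component. -/
def NoBalancedComponentAvoiding (G : SignedGraph V E) (f : E) : Prop :=
  ∀ u : V, ∃ S : Finset E,
    G.IsCircuit S ∧ G.signOf S = -1 ∧ f ∉ S ∧
    ∀ w ∈ G.suppV S, Relation.ReflTransGen (G.AdjOn (univ.erase f)) w u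

/-- `G` is 2-edge-connected: connected, and still connected after removing
any single edge. -/
def TwoEdgeConnected (G : SignedGraph V E) : Prop :=
  G.Connected ∧ ∀ f : E, ∀ u v : V,
    Relation.ReflTransGen (G.AdjOn (univ.erase f)) u v

/-- `G` is antibalanced: replacing its signature `σ` by `-σ` makes it
balanced. -/
def Antibalanced (G : SignedGraph V E) : Prop :=
  ∀ S : Finset E, G.IsCircuit S → (∏ e ∈ S, (-G.sign e)) = 1

end SignedGraph

section AuxLemmas

set_option linter.unusedSectionVars false

namespace SignedGraph

open Finset Relation

variable {V E : Type} [Fintype V] [Fintype E] [DecidableEq V] [DecidableEq E]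
variable (G : SignedGraph V E)

lemma mem_suppV {S : Finset E} {v : V} :
    v ∈ G.suppV S ↔ ∃ e ∈ S, ∃ i : Bool, G.ends e i = v := by
  simp [suppV]

lemma mem_suppV_of {S : Finset E} {e : E} (he : e ∈ S) (i : Bool) :
    G.ends e i ∈ G.suppV S :=
  G.mem_suppV.mpr ⟨e, he, i, rfl⟩

lemma valencyOn_eq_zero {S : Finset E} {v : V} (h : v ∉ G.suppV S) :
    G.valencyOn S v = 0 := by
  rw [valencyOn, Finset.card_eq_zero, Finset.filter_eq_empty_iff]
  rintro p - ⟨hp1, hp2⟩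
  exact h (hp2 ▸ G.mem_suppV_of hp1 p.2)

lemma valencyOn_union {S T : Finset E} (h : Disjoint S T) (v : V) :
    G.valencyOn (S ∪ T) v = G.valencyOn S v + G.valencyOn T v := by
  rw [valencyOn, valencyOn, valencyOn]
  rw [show (univ.filter fun p : E × Bool => p.1 ∈ S ∪ T ∧ G.ends p.1 p.2 = v) =
      (univ.filter fun p : E × Bool => p.1 ∈ S ∧ G.ends p.1 p.2 = v) ∪
      (univ.filter fun p : E × Bool => p.1 ∈ T ∧ G.ends p.1 p.2 = v) by
    ext p; simp [Finset.mem_union, or_and_right]]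
  apply Finset.card_union_of_disjoint
  rw [Finset.disjoint_left]
  rintro p hp hq
  have h1 := (Finset.mem_filter.mp hp).2.1
  have h2 := (Finset.mem_filter.mp hq).2.1
  exact (Finset.disjoint_left.mp h) h1 h2

lemma valencyOn_empty (v : V) : G.valencyOn (∅ : Finset E) v = 0 := by
  rw [valencyOn, Finset.card_eq_zero, Finset.filter_eq_empty_iff]
  rintro p - ⟨hp1, _⟩
  exact absurd hp1 (Finset.notMem_empty _)

lemma valencyOn_biUnion (P : Finset (Finset E))
    (hdisj : ∀ a ∈ P, ∀ b ∈ P, a ≠ b → Disjoint a b) (v : V) :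
    G.valencyOn (P.biUnion id) v = ∑ n ∈ P, G.valencyOn n v := by
  classical
  induction P using Finset.induction with
  | empty => simp [G.valencyOn_empty]
  | insert _ _ hnotmem =>
    rename_i a P ih
    rw [Finset.biUnion_insert, Finset.sum_insert hnotmem]
    simp only [id]
    have hd : Disjoint a (P.biUnion id) := by
      rw [Finset.disjoint_biUnion_right]
      intro b hb
      exact hdisj a (Finset.mem_insert_self _ _) b (Finset.mem_insert_of_mem hb)
        (fun h => hnotmem (h ▸ hb))
    rw [G.valencyOn_union hd, ih (fun x hx y hy hxy =>
      hdisj x (Finset.mem_insert_of_mem hx) y (Finset.mem_insert_of_mem hy) hxy)]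

lemma negEdges_biUnion (P : Finset (Finset E)) :
    G.negEdges (P.biUnion id) = P.biUnion (fun n => G.negEdges n) := by
  ext e
  simp only [negEdges, Finset.mem_filter, Finset.mem_biUnion, id]
  constructor
  · rintro ⟨⟨n, hn, hen⟩, hs⟩; exact ⟨n, hn, hen, hs⟩
  · rintro ⟨n, hn, hen, hs⟩; exact ⟨⟨n, hn, hen⟩, hs⟩

lemma card_negEdges_biUnion (P : Finset (Finset E))
    (hdisj : ∀ a ∈ P, ∀ b ∈ P, a ≠ b → Disjoint a b) :
    (G.negEdges (P.biUnion id)).card = ∑ n ∈ P, (G.negEdges n).card := by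
  rw [G.negEdges_biUnion]
  apply Finset.card_biUnion
  intro a ha b hb hab
  exact Finset.disjoint_filter_filter (hdisj a ha b hb hab)

lemma signOf_eq (S : Finset E) : G.signOf S = (-1) ^ (G.negEdges S).card := by
  classical
  have h1 : ∏ e ∈ S.filter (fun e => G.sign e = -1), G.sign e
      = (-1) ^ (G.negEdges S).card := by
    rw [Finset.prod_congr rfl (fun e he => (Finset.mem_filter.mp he).2),
      Finset.prod_const]
    rfl
  have h2 : ∏ e ∈ S.filter (fun e => ¬ G.sign e = -1), G.sign e = 1 := by
    apply Finset.prod_eq_one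
    intro e he
    rcases Int.units_eq_one_or (G.sign e) with h | h
    · exact h
    · exact absurd h (Finset.mem_filter.mp he).2
  rw [signOf, ← Finset.prod_filter_mul_prod_filter_not S (fun e => G.sign e = -1),
    h1, h2, mul_one]

lemma odd_negEdges_of_unbalanced {S : Finset E} (h : G.signOf S = -1) :
    Odd (G.negEdges S).card := by
  rcases Nat.even_or_odd (G.negEdges S).card with he | ho
  · exfalso
    rw [G.signOf_eq S, Even.neg_one_pow he] at h
    exact absurd h (by decide)
  · exact ho

lemma adjOn_mono {S T : Finset E} (h : S ⊆ T) {u v : V} (ha : G.AdjOn S u v) :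
    G.AdjOn T u v := by
  obtain ⟨e, he, i, h1, h2⟩ := ha
  exact ⟨e, h he, i, h1, h2⟩

lemma suppV_mono {S T : Finset E} (h : S ⊆ T) : G.suppV S ⊆ G.suppV T := by
  intro v hv
  obtain ⟨e, he, i, hi⟩ := G.mem_suppV.mp hv
  exact G.mem_suppV.mpr ⟨e, h he, i, hi⟩

lemma adjOn_endpoints {S : Finset E} {e : E} (he : e ∈ S) (i j : Bool) :
    Relation.ReflTransGen (G.AdjOn S) (G.ends e i) (G.ends e j) := by
  by_cases h : i = j
  · subst h; exact Relation.ReflTransGen.refl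
  · have hj : j = !i := by cases i <;> cases j <;> simp_all
    subst hj
    exact Relation.ReflTransGen.single ⟨e, he, i, rfl, rfl⟩

lemma IsCircuit.evenValency {G : SignedGraph V E} {S : Finset E}
    (h : G.IsCircuit S) (v : V) : Even (G.valencyOn S v) := by
  by_cases hv : v ∈ G.suppV S
  · rw [h.2.2 v hv]; exact ⟨1, rfl⟩
  · rw [G.valencyOn_eq_zero hv]; exact Even.zero

lemma IsCircuit.eulerianOn {G : SignedGraph V E} {S : Finset E}
    (h : G.IsCircuit S) : G.EulerianOn S :=
  ⟨h.1, h.2.1, h.evenValency⟩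

/-- Two edges touch if they share an end-vertex. -/
def Touch (G : SignedGraph V E) (e f : E) : Prop :=
  ∃ i j : Bool, G.ends e i = G.ends f j

lemma touch_symm : Symmetric G.Touch := by
  rintro e f ⟨i, j, h⟩; exact ⟨j, i, h.symm⟩

/-- The connected component of the edge `e` inside the edge set `R`. -/
noncomputable def comp (G : SignedGraph V E) (R : Finset E) (e : E) : Finset E :=
  @Finset.filter _ (fun f => Relation.ReflTransGen (RelOn G.Touch R) e f)
    (Classical.decPred _) R

lemma mem_comp {R : Finset E} {e f : E} :
    f ∈ G.comp R e ↔ f ∈ R ∧ Relation.ReflTransGen (RelOn G.Touch R) e f := by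
  rw [comp]
  exact @Finset.mem_filter _ (fun f => Relation.ReflTransGen (RelOn G.Touch R) e f)
    (Classical.decPred _) R f

lemma comp_subset (R : Finset E) (e : E) : G.comp R e ⊆ R :=
  fun _ hf => (G.mem_comp.mp hf).1

lemma self_mem_comp {R : Finset E} {e : E} (he : e ∈ R) : e ∈ G.comp R e :=
  G.mem_comp.mpr ⟨he, Relation.ReflTransGen.refl⟩

lemma comp_eq_of_mem {R : Finset E} {e f : E} (hf : f ∈ G.comp R e) :
    G.comp R e = G.comp R f := by
  obtain ⟨hfR, hef⟩ := G.mem_comp.mp hf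
  have hsym : Symmetric (RelOn G.Touch R) := RelOn.symm G.touch_symm R
  ext g
  rw [mem_comp, mem_comp]
  constructor
  · rintro ⟨hgR, hg⟩
    exact ⟨hgR, (Std.Symm.symm (self := @Relation.ReflTransGen.stdSymm _ _ ⟨hsym⟩) _ _ hef).trans hg⟩
  · rintro ⟨hgR, hg⟩
    exact ⟨hgR, hef.trans hg⟩

lemma comp_eq_of_not_disjoint {R : Finset E} {e f : E}
    (h : ¬ Disjoint (G.comp R e) (G.comp R f)) : G.comp R e = G.comp R f := by
  rw [Finset.disjoint_left] at h
  push_neg at h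
  obtain ⟨g, hg1, hg2⟩ := h
  rw [G.comp_eq_of_mem hg1, G.comp_eq_of_mem hg2]

lemma comp_closed {R : Finset E} {e f g : E} (hf : f ∈ G.comp R e)
    (hgR : g ∈ R) (ht : G.Touch f g) : g ∈ G.comp R e := by
  obtain ⟨hfR, hef⟩ := G.mem_comp.mp hf
  exact G.mem_comp.mpr ⟨hgR, hef.tail ⟨hfR, hgR, ht⟩⟩

lemma even_valencyOn_comp {R : Finset E} (e : E) {v : V}
    (hR : Even (G.valencyOn R v)) : Even (G.valencyOn (G.comp R e) v) := by
  by_cases h : ∃ f ∈ G.comp R e, ∃ i : Bool, G.ends f i = v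
  · obtain ⟨f, hf, i, hfi⟩ := h
    have : G.valencyOn (G.comp R e) v = G.valencyOn R v := by
      rw [valencyOn, valencyOn]
      congr 1
      ext p
      simp only [Finset.mem_filter, Finset.mem_univ, true_and]
      constructor
      · rintro ⟨h1, h2⟩; exact ⟨G.comp_subset R e h1, h2⟩
      · rintro ⟨h1, h2⟩
        refine ⟨G.comp_closed hf h1 ⟨i, p.2, ?_⟩, h2⟩
        rw [hfi, h2]
    rw [this]; exact hR
  · push_neg at h
    have : v ∉ G.suppV (G.comp R e) := by
      rw [mem_suppV]
      rintro ⟨f, hf, i, hi⟩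
      exact h f hf i hi
    rw [G.valencyOn_eq_zero this]
    exact Even.zero

lemma comp_chain {R : Finset E} {e g : E} :
    ∀ {f}, Relation.ReflTransGen (RelOn G.Touch R) f g →
    f ∈ G.comp R e → ∀ i j : Bool,
      Relation.ReflTransGen (G.AdjOn (G.comp R e)) (G.ends f i) (G.ends g j) := by
  intro f h
  induction h using Relation.ReflTransGen.head_induction_on with
  | refl =>
    intro hg i j
    exact G.adjOn_endpoints hg i j
  | head hab hbg ih =>
    rename_i a b
    intro ha i j
    have hb : b ∈ G.comp R e := G.comp_closed ha hab.2.1 hab.2.2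
    obtain ⟨k, l, hkl⟩ := hab.2.2
    calc
      Relation.ReflTransGen (G.AdjOn (G.comp R e)) (G.ends a i) (G.ends a k) :=
        G.adjOn_endpoints ha i k
      _ = G.ends b l := hkl
      Relation.ReflTransGen _ _ (G.ends g j) := ih hb l j

lemma connOn_comp (R : Finset E) (e : E) : G.ConnOn (G.comp R e) := by
  intro u hu v hv
  obtain ⟨f, hf, i, hfi⟩ := G.mem_suppV.mp hu
  obtain ⟨g, hg, j, hgj⟩ := G.mem_suppV.mp hv
  have hsym : Symmetric (RelOn G.Touch R) := RelOn.symm G.touch_symm R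
  have hef := (G.mem_comp.mp hf).2
  have heg := (G.mem_comp.mp hg).2
  have hfg : Relation.ReflTransGen (RelOn G.Touch R) f g :=
    (Std.Symm.symm (self := @Relation.ReflTransGen.stdSymm _ _ ⟨hsym⟩) _ _ hef).trans heg
  rw [← hfi, ← hgj]
  exact G.comp_chain hfg hf i j

/-- Shared-vertex adjacency between edge sets. -/
def NodeAdj (G : SignedGraph V E) (a b : Finset E) : Prop :=
  ∃ x : V, x ∈ G.suppV a ∧ x ∈ G.suppV b

lemma nodeAdj_symm : Symmetric G.NodeAdj := by
  rintro a b ⟨x, h1, h2⟩; exact ⟨x, h2, h1⟩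

lemma connOn_lift {S U : Finset E} (hSU : S ⊆ U) (hS : G.ConnOn S)
    {u v : V} (hu : u ∈ G.suppV S) (hv : v ∈ G.suppV S) :
    Relation.ReflTransGen (G.AdjOn U) u v :=
  Relation.ReflTransGen.mono (fun _ _ h => G.adjOn_mono hSU h) _ _ (hS u hu v hv)

/-- Gluing connected pieces along a connected pattern of shared vertices. -/
lemma connOn_biUnion {P : Finset (Finset E)}
    (hconn : ∀ n ∈ P, G.ConnOn n)
    (hpc : ∀ m ∈ P, ∀ n ∈ P, Relation.ReflTransGen (RelOn G.NodeAdj P) m n) :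
    G.ConnOn (P.biUnion id) := by
  set U := P.biUnion id with hU
  have hsub : ∀ n ∈ P, n ⊆ U := by
    intro n hn e he
    exact Finset.mem_biUnion.mpr ⟨n, hn, he⟩
  have key : ∀ {m n : Finset E}, Relation.ReflTransGen (RelOn G.NodeAdj P) m n →
      m ∈ P → ∀ u ∈ G.suppV m, ∀ v ∈ G.suppV n,
      Relation.ReflTransGen (G.AdjOn U) u v := by
    intro m n h
    induction h using Relation.ReflTransGen.head_induction_on with
    | refl =>
      intro hm u hu v hv
      exact G.connOn_lift (hsub _ hm) (hconn _ hm) hu hv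
    | head hab hbn ih =>
      rename_i a b
      intro ha u hu v hv
      obtain ⟨x, hxa, hxb⟩ := hab.2.2
      exact (G.connOn_lift (hsub _ ha) (hconn _ ha) hu hxa).trans
        (ih hab.2.1 x hxb v hv)
  intro u hu v hv
  obtain ⟨e, he, i, hi⟩ := G.mem_suppV.mp hu
  obtain ⟨f, hf, j, hj⟩ := G.mem_suppV.mp hv
  obtain ⟨m, hm, hem⟩ := Finset.mem_biUnion.mp he
  obtain ⟨n, hn, hfn⟩ := Finset.mem_biUnion.mp hf
  exact key (hpc m hm n hn) hm u (hi ▸ G.mem_suppV_of hem i) v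
    (hj ▸ G.mem_suppV_of hfn j)

/-- A walk in `G` induces a node-path in any covering family of edge sets. -/
lemma walk_to_nodes {N : Finset (Finset E)}
    (hcov : ∀ f : E, ∃ F ∈ N, f ∈ F) :
    ∀ {u v : V}, Relation.ReflTransGen (G.AdjOn (univ : Finset E)) u v →
    ∀ S ∈ N, u ∈ G.suppV S → ∀ T ∈ N, v ∈ G.suppV T →
    Relation.ReflTransGen (RelOn G.NodeAdj N) S T := by
  intro u v h
  induction h using Relation.ReflTransGen.head_induction_on with
  | refl =>
    intro S hS hu T hT hv
    exact Relation.ReflTransGen.single ⟨hS, hT, ⟨v, hu, hv⟩⟩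
  | head hab hbv ih =>
    rename_i a b
    intro S hS ha T hT hv
    obtain ⟨e, -, i, hea, heb⟩ := hab
    obtain ⟨F, hF, heF⟩ := hcov e
    have haF : a ∈ G.suppV F := hea ▸ G.mem_suppV_of heF i
    have hbF : b ∈ G.suppV F := heb ▸ G.mem_suppV_of heF (!i)
    exact Relation.ReflTransGen.head ⟨hS, hF, ⟨a, ha, haF⟩⟩ (ih F hF hbF T hT hv)

/-- Parity bridge. -/
lemma natCast_zmod_two_eq_one_iff (n : ℕ) : (n : ZMod 2) = 1 ↔ Odd n := by
  rw [Nat.odd_iff, ← ZMod.natCast_mod n 2]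
  rcases Nat.mod_two_eq_zero_or_one n with h | h <;> rw [h] <;> simp

end SignedGraph

end AuxLemmas

open SignedGraph Finset in
/-- If a signed eulerian graph with an odd number of negative
edges contains two edge-disjoint unbalanced circuits, then it can be
decomposed into three edge-disjoint eulerian subgraphs each having an odd
number of negative edges. -/
theorem stmt11 {V E : Type} [Fintype V] [Fintype E] [DecidableEq V]
    [DecidableEq E] (G : SignedGraph V E) (hG : G.Eulerian)
    (hodd : Odd (G.negEdges univ).card)
    (hcirc : ∃ C₁ C₂ : Finset E,
      G.IsUnbalancedCircuit C₁ ∧ G.IsUnbalancedCircuit C₂ ∧ Disjoint C₁ C₂) :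
    ∃ S₁ S₂ S₃ : Finset E,
      Disjoint S₁ S₂ ∧ Disjoint S₁ S₃ ∧ Disjoint S₂ S₃ ∧
      S₁ ∪ S₂ ∪ S₃ = univ ∧
      G.EulerianOn S₁ ∧ G.EulerianOn S₂ ∧ G.EulerianOn S₃ ∧
      Odd (G.negEdges S₁).card ∧ Odd (G.negEdges S₂).card ∧
      Odd (G.negEdges S₃).card := by
  classical
  obtain ⟨C₁, C₂, hu1, hu2, hdisj12⟩ := hcirc
  set R₀ : Finset E := univ \ (C₁ ∪ C₂) with hR₀
  set comps : Finset (Finset E) := R₀.image (fun e => G.comp R₀ e) with hcomps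
  set N : Finset (Finset E) := insert C₁ (insert C₂ comps) with hN
  have hC₁circ := hu1.1
  have hC₂circ := hu2.1
  have hC₁ne : C₁.Nonempty := hC₁circ.1
  have hC₂ne : C₂.Nonempty := hC₂circ.1
  have hcompsub : ∀ S ∈ comps, S ⊆ R₀ := by
    intro S hS
    obtain ⟨e, -, rfl⟩ := Finset.mem_image.mp hS
    exact G.comp_subset R₀ e
  have hcompne : ∀ S ∈ comps, S.Nonempty := by
    intro S hS
    obtain ⟨e, he, rfl⟩ := Finset.mem_image.mp hS
    exact ⟨e, G.self_mem_comp he⟩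
  have hNne : ∀ S ∈ N, S.Nonempty := by
    intro S hS
    rcases Finset.mem_insert.mp hS with rfl | hS
    · exact hC₁ne
    rcases Finset.mem_insert.mp hS with rfl | hS
    · exact hC₂ne
    · exact hcompne S hS
  have hC1notC2 : C₁ ≠ C₂ := by
    intro h
    rw [h] at hdisj12
    exact hC₂ne.ne_empty (by simpa using disjoint_self.mp hdisj12)
  have hRdisj : Disjoint (C₁ ∪ C₂) R₀ := Finset.disjoint_sdiff
  have hC1R0 : Disjoint C₁ R₀ := Finset.disjoint_of_subset_left Finset.subset_union_left hRdisj
  have hC2R0 : Disjoint C₂ R₀ := Finset.disjoint_of_subset_left Finset.subset_union_right hRdisj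
  have hC1notcomps : C₁ ∉ comps := by
    intro h
    have h1 : Disjoint C₁ C₁ := Finset.disjoint_of_subset_right (hcompsub C₁ h) hC1R0
    exact hC₁ne.ne_empty (by simpa using disjoint_self.mp h1)
  have hC2notcomps : C₂ ∉ comps := by
    intro h
    have h1 : Disjoint C₂ C₂ := Finset.disjoint_of_subset_right (hcompsub C₂ h) hC2R0
    exact hC₂ne.ne_empty (by simpa using disjoint_self.mp h1)
  have hpairdisj : ∀ a ∈ N, ∀ b ∈ N, a ≠ b → Disjoint a b := by
    have hcc : ∀ a ∈ comps, ∀ b ∈ comps, a ≠ b → Disjoint a b := by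
      intro a ha b hb hab
      obtain ⟨e, -, rfl⟩ := Finset.mem_image.mp ha
      obtain ⟨f, -, rfl⟩ := Finset.mem_image.mp hb
      by_contra h
      exact hab (G.comp_eq_of_not_disjoint h)
    have hc1 : ∀ a ∈ comps, Disjoint C₁ a := fun a ha =>
      Finset.disjoint_of_subset_right (hcompsub a ha) hC1R0
    have hc2 : ∀ a ∈ comps, Disjoint C₂ a := fun a ha =>
      Finset.disjoint_of_subset_right (hcompsub a ha) hC2R0
    intro a ha b hb hab
    rcases Finset.mem_insert.mp ha with rfl | ha
    · rcases Finset.mem_insert.mp hb with rfl | hb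
      · exact absurd rfl hab
      rcases Finset.mem_insert.mp hb with rfl | hb
      · exact hdisj12
      · exact hc1 b hb
    rcases Finset.mem_insert.mp ha with rfl | ha
    · rcases Finset.mem_insert.mp hb with rfl | hb
      · exact hdisj12.symm
      rcases Finset.mem_insert.mp hb with rfl | hb
      · exact absurd rfl hab
      · exact hc2 b hb
    · rcases Finset.mem_insert.mp hb with rfl | hb
      · exact (hc1 a ha).symm
      rcases Finset.mem_insert.mp hb with rfl | hb
      · exact (hc2 a ha).symm
      · exact hcc a ha b hb hab
  have hcov : ∀ f : E, ∃ F ∈ N, f ∈ F := by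
    intro f
    by_cases h1 : f ∈ C₁
    · exact ⟨C₁, Finset.mem_insert_self _ _, h1⟩
    by_cases h2 : f ∈ C₂
    · exact ⟨C₂, Finset.mem_insert_of_mem (Finset.mem_insert_self _ _), h2⟩
    have hfR : f ∈ R₀ := by
      rw [hR₀, Finset.mem_sdiff]
      exact ⟨Finset.mem_univ f, fun h => (Finset.mem_union.mp h).elim h1 h2⟩
    exact ⟨G.comp R₀ f,
      Finset.mem_insert_of_mem (Finset.mem_insert_of_mem
        (Finset.mem_image.mpr ⟨f, hfR, rfl⟩)), G.self_mem_comp hfR⟩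
  have hcovU : N.biUnion id = univ := by
    apply Finset.eq_univ_of_forall
    intro e
    obtain ⟨F, hF, heF⟩ := hcov e
    exact Finset.mem_biUnion.mpr ⟨F, hF, heF⟩
  have hconnN : ∀ n ∈ N, G.ConnOn n := by
    intro n hn
    rcases Finset.mem_insert.mp hn with rfl | hn
    · exact hC₁circ.2.1
    rcases Finset.mem_insert.mp hn with rfl | hn
    · exact hC₂circ.2.1
    · obtain ⟨e, -, rfl⟩ := Finset.mem_image.mp hn
      exact G.connOn_comp R₀ e
  have hevenR₀ : ∀ v : V, Even (G.valencyOn R₀ v) := by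
    intro v
    have hsplit : (C₁ ∪ C₂) ∪ R₀ = univ := Finset.union_sdiff_of_subset (Finset.subset_univ _)
    have h1 : G.valencyOn ((C₁ ∪ C₂) ∪ R₀) v
        = G.valencyOn C₁ v + G.valencyOn C₂ v + G.valencyOn R₀ v := by
      rw [G.valencyOn_union hRdisj, G.valencyOn_union hdisj12]
    rw [hsplit] at h1
    have h2 : Even (G.valencyOn univ v) := hG.2 v
    have h3 := hC₁circ.evenValency v
    have h4 := hC₂circ.evenValency v
    rw [Nat.even_iff] at h2 h3 h4 ⊢
    omega
  have hevenN : ∀ n ∈ N, ∀ v : V, Even (G.valencyOn n v) := by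
    intro n hn
    rcases Finset.mem_insert.mp hn with rfl | hn
    · exact hC₁circ.evenValency
    rcases Finset.mem_insert.mp hn with rfl | hn
    · exact hC₂circ.evenValency
    · obtain ⟨e, -, rfl⟩ := Finset.mem_image.mp hn
      exact fun v => G.even_valencyOn_comp e (hevenR₀ v)
  have hNconn : ∀ S ∈ N, ∀ T ∈ N, Relation.ReflTransGen (RelOn G.NodeAdj N) S T := by
    intro S hS T hT
    obtain ⟨e, he⟩ := hNne S hS
    obtain ⟨f, hf⟩ := hNne T hT
    exact G.walk_to_nodes hcov (hG.1.2 (G.ends e true) (G.ends f true)) S hS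
      (G.mem_suppV_of he true) T hT (G.mem_suppV_of hf true)
  set w : Finset E → ZMod 2 := fun n => ((G.negEdges n).card : ZMod 2) with hw
  have hw1 : w C₁ = 1 :=
    (SignedGraph.natCast_zmod_two_eq_one_iff _).mpr (G.odd_negEdges_of_unbalanced hu1.2)
  have hw2 : w C₂ = 1 :=
    (SignedGraph.natCast_zmod_two_eq_one_iff _).mpr (G.odd_negEdges_of_unbalanced hu2.2)
  have hcardsum : (G.negEdges univ).card = ∑ n ∈ N, (G.negEdges n).card := by
    rw [← hcovU]
    exact G.card_negEdges_biUnion N hpairdisj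
  have htotN : ∑ n ∈ N, w n = 1 := by
    have : ((G.negEdges univ).card : ZMod 2) = 1 :=
      (SignedGraph.natCast_zmod_two_eq_one_iff _).mpr hodd
    rw [hcardsum] at this
    rw [← this, Nat.cast_sum]
  have hC1notin : C₁ ∉ insert C₂ comps := by
    rw [Finset.mem_insert]
    rintro (h | h)
    · exact hC1notC2 h
    · exact hC1notcomps h
  have hsumcomps : ∑ n ∈ comps, w n = 1 := by
    rw [hN, Finset.sum_insert hC1notin, Finset.sum_insert hC2notcomps, hw1, hw2] at htotN
    have hdec : ∀ s : ZMod 2, 1 + (1 + s) = 1 → s = 1 := by decide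
    exact hdec _ htotN
  have hK : ∃ K ∈ comps, w K = 1 := by
    by_contra h
    push_neg at h
    have : ∑ n ∈ comps, w n = 0 := by
      apply Finset.sum_eq_zero
      intro n hn
      have hall : ∀ a : ZMod 2, a = 0 ∨ a = 1 := by decide
      rcases hall (w n) with h0 | h1
      · exact h0
      · exact absurd h1 (h n hn)
    rw [this] at hsumcomps
    exact zero_ne_one hsumcomps
  obtain ⟨K, hKcomps, hwK⟩ := hK
  have hKN : K ∈ N := Finset.mem_insert_of_mem (Finset.mem_insert_of_mem hKcomps)
  have hC1K : C₁ ≠ K := fun h => hC1notcomps (h ▸ hKcomps)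
  have hC2K : C₂ ≠ K := fun h => hC2notcomps (h ▸ hKcomps)
  obtain ⟨P₁, P₂, P₃, d12, d13, d23, hPU, hc1, hc2, hc3, hs1, hs2, hs3⟩ :=
    tripartition G.nodeAdj_symm N w hNconn htotN C₁ C₂ K
      (Finset.mem_insert_self _ _)
      (Finset.mem_insert_of_mem (Finset.mem_insert_self _ _)) hKN
      hC1notC2 hC1K hC2K hw1 hw2 hwK
  have hPsub : ∀ {P : Finset (Finset E)}, P ⊆ P₁ ∪ P₂ ∪ P₃ → P ⊆ N := fun h =>
    hPU ▸ h
  have hP1N : P₁ ⊆ N := hPsub (Finset.subset_union_left.trans Finset.subset_union_left)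
  have hP2N : P₂ ⊆ N := hPsub (Finset.subset_union_right.trans Finset.subset_union_left)
  have hP3N : P₃ ⊆ N := hPsub Finset.subset_union_right
  -- main data for a part
  have hpart : ∀ P : Finset (Finset E), P ⊆ N →
      (∀ u ∈ P, ∀ v ∈ P, Relation.ReflTransGen (RelOn G.NodeAdj P) u v) →
      (∑ n ∈ P, w n) = 1 →
      G.EulerianOn (P.biUnion id) ∧ Odd (G.negEdges (P.biUnion id)).card := by
    intro P hPN hPc hPs
    have hPd : ∀ a ∈ P, ∀ b ∈ P, a ≠ b → Disjoint a b :=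
      fun a ha b hb => hpairdisj a (hPN ha) b (hPN hb)
    have hPnon : P.Nonempty := by
      rcases Finset.eq_empty_or_nonempty P with rfl | h
      · rw [Finset.sum_empty] at hPs; exact absurd hPs zero_ne_one
      · exact h
    obtain ⟨n, hn⟩ := hPnon
    obtain ⟨e, he⟩ := hNne n (hPN hn)
    constructor
    · refine ⟨⟨e, Finset.mem_biUnion.mpr ⟨n, hn, he⟩⟩, ?_, ?_⟩
      · exact G.connOn_biUnion (fun m hm => hconnN m (hPN hm)) hPc
      · intro v
        rw [G.valencyOn_biUnion P hPd v]
        exact Finset.even_sum _ (fun m hm => hevenN m (hPN hm) v)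
    · rw [← SignedGraph.natCast_zmod_two_eq_one_iff,
        G.card_negEdges_biUnion P hPd, Nat.cast_sum]
      exact hPs
  obtain ⟨heu1, hodd1⟩ := hpart P₁ hP1N hc1 hs1
  obtain ⟨heu2, hodd2⟩ := hpart P₂ hP2N hc2 hs2
  obtain ⟨heu3, hodd3⟩ := hpart P₃ hP3N hc3 hs3
  have hdisjS : ∀ {P Q : Finset (Finset E)}, P ⊆ N → Q ⊆ N → Disjoint P Q →
      Disjoint (P.biUnion id) (Q.biUnion id) := by
    intro P Q hPN hQN hPQ
    rw [Finset.disjoint_left]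
    intro e heP heQ
    obtain ⟨m, hm, hem⟩ := Finset.mem_biUnion.mp heP
    obtain ⟨n, hn, hen⟩ := Finset.mem_biUnion.mp heQ
    by_cases hmn : m = n
    · exact (Finset.disjoint_left.mp hPQ) hm (hmn ▸ hn)
    · exact (Finset.disjoint_left.mp (hpairdisj m (hPN hm) n (hQN hn) hmn)) hem hen
  refine ⟨P₁.biUnion id, P₂.biUnion id, P₃.biUnion id,
    hdisjS hP1N hP2N d12, hdisjS hP1N hP3N d13, hdisjS hP2N hP3N d23, ?_,
    heu1, heu2, heu3, hodd1, hodd2, hodd3⟩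
  rw [← hcovU, ← hPU]
  ext e
  simp only [Finset.mem_union, Finset.mem_biUnion]
  constructor
  · rintro ((⟨n, hn, hen⟩ | ⟨n, hn, hen⟩) | ⟨n, hn, hen⟩)
    · exact ⟨n, Or.inl (Or.inl hn), hen⟩
    · exact ⟨n, Or.inl (Or.inr hn), hen⟩
    · exact ⟨n, Or.inr hn, hen⟩
  · rintro ⟨n, (hn | hn) | hn, hen⟩
    · exact Or.inl (Or.inl ⟨n, hn, hen⟩)
    · exact Or.inl (Or.inr ⟨n, hn, hen⟩)
    · exact Or.inr ⟨n, hn, hen⟩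
end

section
/- Let T be a finite tree whose vertices are partitioned into white vertices and black vertices, such that the number of black vertices is odd and at least 3. Then the vertex set of T can be partitioned into three subsets such that each subset contains an odd number of black vertices and each subset induces a subtree of T. -/
open Finset

open Finset SimpleGraph

namespace Stmt15Aux

set_option linter.unusedSectionVars false

variable {V : Type} [DecidableEq V] {T : SimpleGraph V}

section
variable (hp : ∀ x y : V, ∃! p : T.Walk x y, p.IsPath)

noncomputable def pth (x y : V) : T.Walk x y := (hp x y).exists.choose

lemma pth_isPath (x y : V) : (pth hp x y).IsPath := (hp x y).exists.choose_spec

lemma pth_unique {x y : V} {w : T.Walk x y} (hw : w.IsPath) : w = pth hp x y :=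
  (hp x y).unique hw (pth_isPath hp x y)

lemma pth_self (x : V) : pth hp x x = Walk.nil :=
  (pth_unique hp (Walk.IsPath.nil)).symm

lemma pth_split {x y z : V} (h : z ∈ (pth hp x y).support) :
    pth hp x y = (pth hp x z).append (pth hp z y) := by
  have hP := pth_isPath hp x y
  have h1 : ((pth hp x y).takeUntil z h) = pth hp x z := pth_unique hp (hP.takeUntil h)
  have h2 : ((pth hp x y).dropUntil z h) = pth hp z y := pth_unique hp (hP.dropUntil h)
  conv_lhs => rw [← Walk.take_spec (pth hp x y) h]
  rw [h1, h2]

lemma pth_rev (x y : V) : (pth hp x y).reverse = pth hp y x :=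
  pth_unique hp ((pth_isPath hp x y).reverse)

lemma len_split {x y z : V} (h : z ∈ (pth hp x y).support) :
    (pth hp x y).length = (pth hp x z).length + (pth hp z y).length := by
  conv_lhs => rw [pth_split hp h]
  exact Walk.length_append _ _

lemma supp_left {x y z w : V} (h : z ∈ (pth hp x y).support)
    (hw : w ∈ (pth hp x z).support) : w ∈ (pth hp x y).support := by
  rw [pth_split hp h, Walk.mem_support_append_iff]; exact Or.inl hw

lemma supp_right {x y z w : V} (h : z ∈ (pth hp x y).support)
    (hw : w ∈ (pth hp z y).support) : w ∈ (pth hp x y).support := by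
  rw [pth_split hp h, Walk.mem_support_append_iff]; exact Or.inr hw

lemma len_zero {x y : V} (h : (pth hp x y).length = 0) : x = y :=
  Walk.eq_of_length_eq_zero h

/-- if `y` is on path `v→x` and `v` is on path `y→x` then `v = y`. -/
lemma eq_of_mem_mem {v x y : V} (h1 : y ∈ (pth hp v x).support)
    (h2 : v ∈ (pth hp y x).support) : v = y := by
  have e1 := len_split hp h1
  have e2 := len_split hp h2
  have e3 : (pth hp y v).length = (pth hp v y).length := by
    rw [← pth_rev hp v y, Walk.length_reverse]
  exact len_zero hp (by omega)
end

section
variable [Fintype V] (hp : ∀ x y : V, ∃! p : T.Walk x y, p.IsPath) (r : V)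

/-- The "cone" of descendants of `v` when the tree is rooted at `r`. -/
noncomputable def D (v : V) : Finset V :=
  univ.filter fun x => v ∈ (pth hp r x).support

lemma mem_D {v x : V} : x ∈ D hp r v ↔ v ∈ (pth hp r x).support := by
  simp [D]

lemma self_mem_D (v : V) : v ∈ D hp r v :=
  (mem_D hp r).2 (Walk.end_mem_support _)

lemma root_mem_D {v : V} : r ∈ D hp r v ↔ v = r := by
  rw [mem_D, pth_self hp r, Walk.support_nil, List.mem_singleton]

lemma dep_lt {v x : V} (hx : x ∈ D hp r v) (hne : x ≠ v) :
    (pth hp r v).length < (pth hp r x).length := by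
  have := len_split hp ((mem_D hp r).1 hx)
  have hz : (pth hp v x).length ≠ 0 := fun h => hne (len_zero hp h).symm
  omega

lemma D_mono {a b : V} (h : a ∈ D hp r b) : D hp r a ⊆ D hp r b := by
  intro x hx
  rw [mem_D] at h hx ⊢
  exact supp_left hp hx h

lemma up_closed {v x y : V} (hy : y ∈ (pth hp r x).support) (h : y ∈ D hp r v) :
    x ∈ D hp r v := by
  rw [mem_D] at h ⊢
  exact supp_left hp hy h

lemma D_closed {v x y : V} (hx : x ∈ D hp r v) (hy : y ∈ (pth hp v x).support) :
    y ∈ D hp r v := by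
  rw [mem_D] at hx ⊢
  have hy' : y ∈ (pth hp r x).support := supp_right hp hx hy
  rw [pth_split hp hy', Walk.mem_support_append_iff] at hx
  rcases hx with h | h
  · exact h
  · rw [eq_of_mem_mem hp hy h]
    exact Walk.end_mem_support _
end


section
set_option linter.unusedSectionVars false
variable {V : Type} [DecidableEq V] {T : SimpleGraph V}

lemma reach_of (s : Set V) : ∀ {a x : V} (w : T.Walk a x) (hw : ∀ y ∈ w.support, y ∈ s),
    (T.induce s).Reachable ⟨a, hw a w.start_mem_support⟩ ⟨x, hw x w.end_mem_support⟩ := by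
  intro a x w
  induction w with
  | nil => exact fun _ => Reachable.refl _
  | @cons a b x hab p ih =>
    intro hw
    have hb : b ∈ s := hw b (by simp)
    have h1 : (T.induce s).Adj ⟨a, hw a (Walk.start_mem_support _)⟩ ⟨b, hb⟩ := hab
    exact (h1.reachable).trans (ih fun y hy => hw y (by simp [hy]))

variable [Fintype V] (hp : ∀ x y : V, ∃! p : T.Walk x y, p.IsPath)

lemma conn_aux (s : Finset V) (a : V) (ha : a ∈ s)
    (h : ∀ x ∈ s, ∀ y ∈ (pth hp a x).support, y ∈ s) :
    (T.induce (s : Set V)).Connected := by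
  rw [connected_iff]
  refine ⟨?_, ⟨⟨a, ha⟩⟩⟩
  rintro ⟨x, hx⟩ ⟨y, hy⟩
  have r1 := reach_of (s : Set V) (pth hp a x) (fun z hz => h x hx z hz)
  have r2 := reach_of (s : Set V) (pth hp a y) (fun z hz => h y hy z hz)
  exact r1.symm.trans r2
end


end Stmt15Aux


open Stmt15Aux

/-- Let `T` be a finite tree whose vertices are partitioned into
white vertices and black vertices (here `black` is the set of black vertices,
all remaining vertices being white), such that the number of black vertices is
odd and at least `3`.  Then the vertex set of `T` can be partitioned into
three subsets such that each subset contains an odd number of black vertices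
and each subset induces a subtree of `T`. -/
theorem stmt15 {V : Type} [Fintype V] [DecidableEq V] (T : SimpleGraph V)
    (hT : T.IsTree) (black : Finset V) (hodd : Odd black.card)
    (h3 : 3 ≤ black.card) :
    ∃ V₁ V₂ V₃ : Finset V,
      Disjoint V₁ V₂ ∧ Disjoint V₁ V₃ ∧ Disjoint V₂ V₃ ∧
      V₁ ∪ V₂ ∪ V₃ = univ ∧
      Odd (black ∩ V₁).card ∧ Odd (black ∩ V₂).card ∧ Odd (black ∩ V₃).card ∧
      (T.induce (V₁ : Set V)).Connected ∧
      (T.induce (V₂ : Set V)).Connected ∧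
      (T.induce (V₃ : Set V)).Connected := by
  classical
  have hp := hT.existsUnique_path
  have hbn : black.Nonempty := Finset.card_pos.1 (by omega)
  obtain ⟨r, -⟩ := hbn
  obtain ⟨v1, hv1b, hmax1⟩ := Finset.exists_max_image black
    (fun v => (pth hp r v).length) (Finset.card_pos.1 (by omega))
  have hbe : (black.erase v1).Nonempty := by
    rw [← Finset.card_pos, Finset.card_erase_of_mem hv1b]; omega
  obtain ⟨v2, hv2e, hmax2⟩ := Finset.exists_max_image (black.erase v1)
    (fun v => (pth hp r v).length) hbe
  have hv2b : v2 ∈ black := Finset.mem_of_mem_erase hv2e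
  have hv21 : v2 ≠ v1 := Finset.ne_of_mem_erase hv2e
  have hlen_rr : (pth hp r r).length = 0 := by rw [pth_self hp]; rfl
  have hv1r : v1 ≠ r := by
    intro h; subst h
    have hsub : black ⊆ {v1} := by
      intro b hb
      have h1 := hmax1 b hb
      rw [hlen_rr] at h1
      rw [Finset.mem_singleton]
      exact (len_zero hp (Nat.le_zero.1 h1)).symm
    have := Finset.card_le_card hsub
    simp at this; omega
  have hv2r : v2 ≠ r := by
    intro h; subst h
    have hsub : black.erase v1 ⊆ {v2} := by
      intro b hb
      have h1 := hmax2 b hb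
      rw [hlen_rr] at h1
      rw [Finset.mem_singleton]
      exact (len_zero hp (Nat.le_zero.1 h1)).symm
    have := Finset.card_le_card hsub
    rw [Finset.card_erase_of_mem hv1b] at this
    simp only [Finset.card_singleton] at this
    omega
  have hBD1 : black ∩ D hp r v1 = {v1} := by
    apply Finset.Subset.antisymm
    · intro x hx
      rw [Finset.mem_inter] at hx
      rw [Finset.mem_singleton]
      by_contra hne
      exact absurd (hmax1 x hx.1) (not_le.2 (dep_lt hp r hx.2 hne))
    · simp only [Finset.singleton_subset_iff, Finset.mem_inter]
      exact ⟨hv1b, self_mem_D hp r v1⟩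
  have hBD2 : black ∩ D hp r v2 ⊆ {v1, v2} := by
    intro x hx
    rw [Finset.mem_inter] at hx
    rw [Finset.mem_insert, Finset.mem_singleton]
    by_contra hne
    push_neg at hne
    have hxe : x ∈ black.erase v1 := Finset.mem_erase.2 ⟨hne.1, hx.1⟩
    exact absurd (hmax2 x hxe) (not_le.2 (dep_lt hp r hx.2 hne.2))
  have hv2nD1 : v2 ∉ D hp r v1 := fun h =>
    absurd (hmax1 v2 hv2b) (not_le.2 (dep_lt hp r h hv21))
  have hrD : ∀ v : V, v ≠ r → r ∉ D hp r v := by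
    intro v hv hmem
    exact hv ((root_mem_D hp r).1 hmem)
  have hoddsub : Odd (black.card - 2) := by
    rw [Nat.odd_iff] at hodd ⊢; omega
  have hcard2 : ({v1, v2} : Finset V).card = 2 := by
    rw [Finset.card_insert_of_notMem (by simpa using hv21.symm), Finset.card_singleton]
  by_cases hcase : v1 ∈ D hp r v2
  · -- v1 is a descendant of v2
    have hsub : D hp r v1 ⊆ D hp r v2 := D_mono hp r hcase
    have hBD2' : black ∩ D hp r v2 = {v1, v2} := by
      apply Finset.Subset.antisymm hBD2
      intro x hx
      rw [Finset.mem_insert, Finset.mem_singleton] at hx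
      rcases hx with h | h
      · rw [h, Finset.mem_inter]; exact ⟨hv1b, hcase⟩
      · rw [h, Finset.mem_inter]; exact ⟨hv2b, self_mem_D hp r v2⟩
    refine ⟨D hp r v1, D hp r v2 \ D hp r v1, univ \ D hp r v2,
      Finset.disjoint_sdiff, Finset.disjoint_sdiff.mono_left hsub,
      Finset.disjoint_sdiff.mono_left Finset.sdiff_subset, ?_, ?_, ?_, ?_, ?_, ?_, ?_⟩
    · rw [Finset.union_sdiff_of_subset hsub,
        Finset.union_sdiff_of_subset (Finset.subset_univ _)]
    · rw [hBD1]; simp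
    · have hV2 : black ∩ (D hp r v2 \ D hp r v1) = {v2} := by
        apply Finset.Subset.antisymm
        · intro x hx
          rw [Finset.mem_inter, Finset.mem_sdiff] at hx
          have hx12 := hBD2 (Finset.mem_inter.2 ⟨hx.1, hx.2.1⟩)
          rw [Finset.mem_insert, Finset.mem_singleton] at hx12
          rcases hx12 with h | h
          · exact absurd (h ▸ hx.2.2) (not_not_intro (self_mem_D hp r v1))
          · simp [h]
        · simp only [Finset.singleton_subset_iff, Finset.mem_inter, Finset.mem_sdiff]
          exact ⟨hv2b, self_mem_D hp r v2, hv2nD1⟩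
      rw [hV2]; simp
    · have hV3 : black ∩ (univ \ D hp r v2) = black \ (black ∩ D hp r v2) := by
        ext x
        simp only [Finset.mem_inter, Finset.mem_sdiff, Finset.mem_univ, true_and]
        tauto
      rw [hV3, hBD2', Finset.card_sdiff_of_subset (by rw [← hBD2']; exact Finset.inter_subset_left),
        hcard2]
      exact hoddsub
    · exact conn_aux hp _ v1 (self_mem_D hp r v1)
        (fun x hx y hy => D_closed hp r hx hy)
    · refine conn_aux hp _ v2 (Finset.mem_sdiff.2 ⟨self_mem_D hp r v2, hv2nD1⟩) ?_
      intro x hx y hy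
      rw [Finset.mem_sdiff] at hx ⊢
      refine ⟨D_closed hp r hx.1 hy, fun hyD1 => ?_⟩
      have hv2supp : v2 ∈ (pth hp r x).support := (mem_D hp r).1 hx.1
      exact hx.2 (up_closed hp r (supp_right hp hv2supp hy) hyD1)
    · refine conn_aux hp _ r
        (Finset.mem_sdiff.2 ⟨Finset.mem_univ r, hrD v2 hv2r⟩) ?_
      intro x hx y hy
      rw [Finset.mem_sdiff] at hx ⊢
      exact ⟨Finset.mem_univ y, fun h => hx.2 (up_closed hp r hy h)⟩
  · -- the two cones are disjoint
    have hdisj : Disjoint (D hp r v1) (D hp r v2) := by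
      rw [Finset.disjoint_left]
      intro x hx1 hx2
      have h1 : v1 ∈ (pth hp r x).support := (mem_D hp r).1 hx1
      have h2 : v2 ∈ (pth hp r x).support := (mem_D hp r).1 hx2
      rw [pth_split hp h1, Walk.mem_support_append_iff] at h2
      rcases h2 with h | h
      · exact hcase ((mem_D hp r).2 h)
      · exact hv2nD1 (D_closed hp r hx1 h)
    have hBD2' : black ∩ D hp r v2 = {v2} := by
      apply Finset.Subset.antisymm
      · intro x hx
        have hx12 := hBD2 hx
        rw [Finset.mem_insert, Finset.mem_singleton] at hx12
        rw [Finset.mem_inter] at hx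
        rw [Finset.mem_singleton]
        rcases hx12 with h | h
        · exact absurd (h ▸ hx.2) hcase
        · exact h
      · simp only [Finset.singleton_subset_iff, Finset.mem_inter]
        exact ⟨hv2b, self_mem_D hp r v2⟩
    refine ⟨D hp r v1, D hp r v2, univ \ (D hp r v1 ∪ D hp r v2),
      hdisj,
      Finset.disjoint_sdiff.mono_left Finset.subset_union_left,
      Finset.disjoint_sdiff.mono_left Finset.subset_union_right, ?_, ?_, ?_, ?_, ?_, ?_, ?_⟩
    · rw [Finset.union_sdiff_of_subset (Finset.subset_univ _)]
    · rw [hBD1]; simp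
    · rw [hBD2']; simp
    · have hBU : black ∩ (D hp r v1 ∪ D hp r v2) = {v1, v2} := by
        rw [Finset.inter_union_distrib_left, hBD1, hBD2']
        rfl
      have hV3 : black ∩ (univ \ (D hp r v1 ∪ D hp r v2))
          = black \ (black ∩ (D hp r v1 ∪ D hp r v2)) := by
        ext x
        simp only [Finset.mem_inter, Finset.mem_sdiff, Finset.mem_univ, true_and]
        tauto
      rw [hV3, hBU, Finset.card_sdiff_of_subset (by rw [← hBU]; exact Finset.inter_subset_left),
        hcard2]
      exact hoddsub
    · exact conn_aux hp _ v1 (self_mem_D hp r v1)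
        (fun x hx y hy => D_closed hp r hx hy)
    · exact conn_aux hp _ v2 (self_mem_D hp r v2)
        (fun x hx y hy => D_closed hp r hx hy)
    · refine conn_aux hp _ r (Finset.mem_sdiff.2 ⟨Finset.mem_univ r, ?_⟩) ?_
      · rw [Finset.mem_union]
        push_neg
        exact ⟨hrD v1 hv1r, hrD v2 hv2r⟩
      · intro x hx y hy
        rw [Finset.mem_sdiff, Finset.mem_union] at hx ⊢
        push_neg at hx ⊢
        exact ⟨Finset.mem_univ y,
          fun h => hx.2.1 (up_closed hp r hy h),
          fun h => hx.2.2 (up_closed hp r hy h)⟩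
end
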